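/- arXiv:0706.3852 — 5 statements merged into one kernel-verified Lean document; each statement's English description precedes it below -/
import Mathlib

section
/- No basic mechanism f with f(0,1) = f(1,0) = (0,0) and f(1,1) ≠ (0,0) has a dual mechanism. -/
/-- Swap the two coordinates of a pair of Booleans. -/
def dag (x : Bool × Bool) : Bool × Bool := (x.2, x.1)

/-- Componentwise minimum on `{0,1}^2`. -/
def bmeet (x y : Bool × Bool) : Bool × Bool := (x.1 && y.1, x.2 && y.2)

/-- Duality of basic mechanisms. -/
def IsDual (f g : Bool × Bool → Bool × Bool) : Prop :=
  (∀ x y, bmeet y (dag (f x)) = (false, false) → bmeet (g y) (dag x) = (false, false)) ∧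
  (∀ x y, bmeet x (dag (g y)) = (false, false) → bmeet (f x) (dag y) = (false, false))

theorem no_dual_of_kills_mixed (f : Bool × Bool → Bool × Bool)
    (h01 : f (false, true) = (false, false)) (h10 : f (true, false) = (false, false))
    (h11 : f (true, true) ≠ (false, false)) :
    ¬ ∃ g : Bool × Bool → Bool × Bool, IsDual f g := by
  rintro ⟨g, h1, h2⟩
  have hg1 : ∀ y, (g y).1 = false := by
    intro y
    have := h1 (false, true) y (by simp [bmeet, dag, h01])
    have := congrArg Prod.fst this
    simpa [bmeet, dag] using this
  have hg2 : ∀ y, (g y).2 = false := by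
    intro y
    have := h1 (true, false) y (by simp [bmeet, dag, h10])
    have := congrArg Prod.snd this
    simpa [bmeet, dag] using this
  have := h2 (true, true) (true, true) (by simp [bmeet, dag, hg1, hg2])
  exact h11 (by simpa [bmeet, dag, Prod.ext_iff] using this)
end

section
/- The mechanism f with f(0,0) = (0,0), f(0,1) = (0,1), f(1,0) = (0,1), f(1,1) = (1,1) has no dual mechanism. -/
def f14 : Bool × Bool → Bool × Bool
  | (false, false) => (false, false)
  | (false, true) => (false, true)
  | (true, false) => (false, true)
  | (true, true) => (true, true)

theorem f14_no_dual : ¬ ∃ g : Bool × Bool → Bool × Bool, IsDual f14 g := by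
  rintro ⟨g, h1, h2⟩
  have a := h1 (true, false) (false, true) (by decide)
  have b := h1 (false, true) (false, true) (by decide)
  have hg : g (false, true) = (false, false) := by
    rcases h : g (false, true) with ⟨u, v⟩
    rw [h] at a b
    cases u <;> cases v <;> simp_all [bmeet, dag, f14]
  have c := h2 (true, true) (false, true) (by rw [hg]; decide)
  simp [bmeet, dag, f14] at c
end

section
/- There are exactly 16 basic mechanisms f : {0,1}^2 → {0,1}^2 that admit a dual mechanism, and exactly 8 of these are self-dual. -/
/-! ### Auxiliary machinery: encode mechanisms as 4-tuples of values -/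

abbrev T := (Bool × Bool) × (Bool × Bool) × (Bool × Bool) × (Bool × Bool)

def ap (t : T) : Bool × Bool → Bool × Bool
  | (false, false) => t.1
  | (false, true)  => t.2.1
  | (true, false)  => t.2.2.1
  | (true, true)   => t.2.2.2

def tup (f : Bool × Bool → Bool × Bool) : T :=
  (f (false, false), f (false, true), f (true, false), f (true, true))

lemma ap_tup (f : Bool × Bool → Bool × Bool) : ap (tup f) = f := by
  funext x; rcases x with ⟨a, b⟩; cases a <;> cases b <;> rfl

instance (f g) : Decidable (IsDual f g) := by unfold IsDual; infer_instance

def eT : (Bool × Bool → Bool × Bool) ≃ T where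
  toFun := tup
  invFun := ap
  left_inv := ap_tup
  right_inv := by rintro ⟨a, b, c, d⟩; rfl

def pts : List (Bool × Bool) := [(false,false),(false,true),(true,false),(true,true)]

lemma mem_pts : ∀ x : Bool × Bool, x ∈ pts := by decide

/-- Boolean version of "bmeet y (dag a) = 0 → bmeet b (dag x) = 0". -/
def c1 (a x y b : Bool × Bool) : Bool :=
  !(!(y.1 && a.2) && !(y.2 && a.1)) || (!(b.1 && x.2) && !(b.2 && x.1))

lemma c1_iff : ∀ a x y b : Bool × Bool,
    (bmeet y (dag a) = (false, false) → bmeet b (dag x) = (false, false)) ↔ c1 a x y b = true := by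
  decide

def isDualB (t s : T) : Bool :=
  (pts.all fun x => pts.all fun y => c1 (ap t x) x y (ap s y)) &&
  (pts.all fun x => pts.all fun y => c1 (ap s y) y x (ap t x))

lemma forall_iff_all (p : Bool × Bool → Bool × Bool → Prop)
    (q : Bool × Bool → Bool × Bool → Bool) (h : ∀ x y, p x y ↔ q x y = true) :
    (∀ x y, p x y) ↔ (pts.all fun x => pts.all fun y => q x y) = true := by
  simp only [List.all_eq_true]
  exact ⟨fun H x _ y _ => (h x y).1 (H x y),
         fun H x y => (h x y).2 (H x (mem_pts x) y (mem_pts y))⟩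

lemma isDual_iff (t s : T) : IsDual (ap t) (ap s) ↔ isDualB t s = true := by
  unfold IsDual isDualB
  rw [Bool.and_eq_true,
    forall_iff_all _ _ (fun x y => c1_iff (ap t x) x y (ap s y)),
    forall_iff_all _ _ (fun x y => c1_iff (ap s y) y x (ap t x))]

/-- "Dualizability" predicate: `f(0,0) = (0,0)` and `f(1,1)` is the join of `f(0,1), f(1,0)`. -/
def dlz (t : T) : Bool :=
  t.1 == (false, false) &&
  t.2.2.2 == (t.2.1.1 || t.2.2.1.1, t.2.1.2 || t.2.2.1.2)

/-- Explicit dual witness of a dualizable mechanism. -/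
def dualW (t : T) : T :=
  ((false, false), (t.2.1.1, t.2.2.1.1), (t.2.1.2, t.2.2.1.2),
   (t.2.1.1 || t.2.1.2, t.2.2.1.1 || t.2.2.1.2))

/-- All tuples whose first component is `(0,0)`. -/
def allT0 : List T :=
  pts.flatMap fun b => pts.flatMap fun c => pts.map fun d => (((false,false) : Bool × Bool), b, c, d)

lemma mem_allT0 : ∀ b c d : Bool × Bool, (((false,false) : Bool × Bool), b, c, d) ∈ allT0 := by
  decide

set_option maxRecDepth 2000000 in
lemma L0 : allT0.all (fun t => dlz t || !(allT0.any fun s => isDualB t s)) = true := by decide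

set_option maxRecDepth 200000 in
lemma Wd : ∀ t : T, dlz t = true → isDualB t (dualW t) = true := by decide

lemma f00 {f g} (h : IsDual f g) : f (false, false) = (false, false) := by
  have h2 := h.2 (false, false) (true, true) (by simp [bmeet])
  have : f (false, false) = ((f (false, false)).1, (f (false, false)).2) := rfl
  rw [this]
  simp only [bmeet, dag, Bool.and_true, Prod.mk.injEq] at h2 ⊢
  exact ⟨h2.1, h2.2⟩

lemma g00 {f g} (h : IsDual f g) : g (false, false) = (false, false) := by
  have h1 := h.1 (true, true) (false, false) (by simp [bmeet])
  have : g (false, false) = ((g (false, false)).1, (g (false, false)).2) := rfl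
  rw [this]
  simp only [bmeet, dag, Bool.and_true, Prod.mk.injEq] at h1 ⊢
  exact ⟨h1.1, h1.2⟩

lemma main_iff (f : Bool × Bool → Bool × Bool) :
    (∃ g, IsDual f g) ↔ dlz (tup f) = true := by
  constructor
  · rintro ⟨g, hg⟩
    have hf : tup f ∈ allT0 := by
      have : tup f = (((false,false) : Bool × Bool), f (false,true), f (true,false), f (true,true)) := by
        unfold tup; rw [f00 hg]
      rw [this]; exact mem_allT0 _ _ _
    have hgm : tup g ∈ allT0 := by
      have : tup g = (((false,false) : Bool × Bool), g (false,true), g (true,false), g (true,true)) := by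
        unfold tup; rw [g00 hg]
      rw [this]; exact mem_allT0 _ _ _
    have hB : isDualB (tup f) (tup g) = true :=
      (isDual_iff (tup f) (tup g)).1 (by rwa [ap_tup, ap_tup])
    have hAny : (allT0.any fun s => isDualB (tup f) s) = true :=
      List.any_eq_true.2 ⟨tup g, hgm, hB⟩
    have := List.all_eq_true.1 L0 (tup f) hf
    rw [hAny] at this
    simpa using this
  · intro h
    refine ⟨ap (dualW (tup f)), ?_⟩
    have := (isDual_iff (tup f) (dualW (tup f))).2 (Wd _ h)
    rwa [ap_tup] at this

set_option maxRecDepth 200000 in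
theorem card_dualizable_and_selfDual :
    Nat.card {f : Bool × Bool → Bool × Bool // ∃ g, IsDual f g} = 16 ∧
    Nat.card {f : Bool × Bool → Bool × Bool // IsDual f f} = 8 := by
  constructor
  · have e1 : {f : Bool × Bool → Bool × Bool // ∃ g, IsDual f g} ≃
        {t : T // dlz t = true} :=
      Equiv.subtypeEquiv eT (fun f => by rw [main_iff]; rfl)
    rw [Nat.card_congr e1, Nat.card_eq_fintype_card]
    decide
  · have e2 : {f : Bool × Bool → Bool × Bool // IsDual f f} ≃
        {t : T // IsDual (ap t) (ap t)} :=
      Equiv.subtypeEquiv eT (fun f => by rw [show eT f = tup f from rfl, ap_tup])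
    rw [Nat.card_congr e2, Nat.card_eq_fintype_card]
    decide
end

section
/- If a basic mechanism f admits some dual mechanism g, then f is monotone and satisfies f(0,0) = (0,0). -/
theorem monotone_and_zero_of_has_dual (f : Bool × Bool → Bool × Bool)
    (h : ∃ g : Bool × Bool → Bool × Bool, IsDual f g) :
    (∀ x y : Bool × Bool, x ≤ y → f x ≤ f y) ∧ f (false, false) = (false, false) := by
  obtain ⟨g, hg1, hg2⟩ := h
  have key : ∀ x y : Bool × Bool, x ≤ y → ∀ w, bmeet w (dag (f y)) = (false, false) →
      bmeet (f x) (dag w) = (false, false) := by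
    intro x y hxy w hw
    have h1 := hg1 y w hw
    apply hg2
    simp only [bmeet, dag, Prod.ext_iff] at h1 ⊢
    obtain ⟨hx1, hx2⟩ := hxy
    revert h1
    rcases x with ⟨a, b⟩; rcases y with ⟨c, d⟩
    rcases g w with ⟨p, q⟩
    simp only at *
    revert hx1 hx2
    cases a <;> cases b <;> cases c <;> cases d <;> cases p <;> cases q <;> decide
  constructor
  · intro x y hxy
    have h1 := key x y hxy (!(f y).2, !(f y).1) (by
      simp only [bmeet, dag, Prod.ext_iff]
      cases (f y).1 <;> cases (f y).2 <;> simp)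
    simp only [bmeet, dag, Prod.ext_iff] at h1
    obtain ⟨ha, hb⟩ := h1
    have blem : ∀ a b : Bool, (a && !b) = false → a ≤ b := by decide
    exact ⟨blem _ _ ha, blem _ _ hb⟩
  · have h1 := hg2 (false, false) (true, true) (by simp [bmeet, dag])
    simp only [bmeet, dag, Prod.ext_iff] at h1
    rcases h1 with ⟨h1, h2⟩
    simp at h1 h2
    exact Prod.ext h1 h2
end

section
/- For all natural numbers R, l ≤ N with N ≥ 1, the difference between the binomial no-success probability (1 − R/N)^l and the hypergeometric no-success probability C(N−R,l)/C(N,l) is bounded in absolute value by 4l/N. -/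
open Finset

private lemma aux_pow_bound (x : ℝ) (hx0 : 0 ≤ x) (hx1 : x ≤ 1) :
    ∀ i : ℕ, (1 - x) ^ i * (1 + i * x) ≤ 1 := by
  intro i
  induction i with
  | zero => simp
  | succ n ih =>
    have h1 : (0:ℝ) ≤ 1 - x := by linarith
    have h2 : (0:ℝ) ≤ (1 - x) ^ n := pow_nonneg h1 n
    have hn : (0:ℝ) ≤ (n : ℝ) := Nat.cast_nonneg n
    have key : (1 - x) ^ (n+1) * (1 + (n+1 : ℕ) * x) ≤ (1 - x) ^ n * (1 + n * x) := by
      push_cast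
      have h3 : (1 - x) * (1 + ((n:ℝ)+1) * x) ≤ 1 + n * x := by
        nlinarith [mul_nonneg hn (sq_nonneg x), sq_nonneg x]
      calc (1 - x) ^ (n+1) * (1 + ((n:ℝ)+1) * x)
          = (1 - x) ^ n * ((1 - x) * (1 + ((n:ℝ)+1) * x)) := by ring
        _ ≤ (1 - x) ^ n * (1 + n * x) := by
            exact mul_le_mul_of_nonneg_left h3 h2
    exact key.trans ih

private lemma aux_prod_bound (a : ℝ) (b : ℕ → ℝ) (ha0 : 0 ≤ a) (ha1 : a ≤ 1) :
    ∀ k : ℕ, (∀ i < k, 0 ≤ b i ∧ b i ≤ a) →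
      (0 ≤ ∏ i ∈ range k, b i) ∧ (∏ i ∈ range k, b i ≤ a ^ k) ∧
      a ^ k - ∏ i ∈ range k, b i ≤ ∑ i ∈ range k, a ^ i * (a - b i) := by
  intro k
  induction k with
  | zero => simp
  | succ n ih =>
    intro hb
    obtain ⟨hP0, hPle, hPsum⟩ := ih (fun i hi => hb i (hi.trans (Nat.lt_succ_self n)))
    have hbn := hb n (Nat.lt_succ_self n)
    rw [prod_range_succ, sum_range_succ]
    refine ⟨mul_nonneg hP0 hbn.1, ?_, ?_⟩
    · calc (∏ i ∈ range n, b i) * b n ≤ a ^ n * a :=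
          mul_le_mul hPle hbn.2 hbn.1 (pow_nonneg ha0 n)
        _ = a ^ (n+1) := by ring
    · have h1 : (∏ i ∈ range n, b i) * b n ≥ (∏ i ∈ range n, b i) * a - (a ^ n) * (a - b n) := by
        have : (a ^ n - ∏ i ∈ range n, b i) * (a - b n) ≥ 0 :=
          mul_nonneg (by linarith) (by linarith [hbn.2])
        nlinarith
      have h2 : (∏ i ∈ range n, b i) * a ≥ a ^ (n+1) - (∑ i ∈ range n, a ^ i * (a - b i)) * a := by
        have h := mul_le_mul_of_nonneg_right hPsum ha0
        rw [sub_mul] at h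
        rw [pow_succ]
        linarith
      have h3 : (∑ i ∈ range n, a ^ i * (a - b i)) * a ≤ ∑ i ∈ range n, a ^ i * (a - b i) := by
        have hs : 0 ≤ ∑ i ∈ range n, a ^ i * (a - b i) := by
          apply sum_nonneg
          intro i hi
          exact mul_nonneg (pow_nonneg ha0 i) (by linarith [(hb i ((mem_range.mp hi).trans (Nat.lt_succ_self n))).2])
        nlinarith
      linarith

set_option maxHeartbeats 1600000 in
theorem binomial_hypergeometric_zero_close (N R l : ℕ) (hN : 1 ≤ N) (hR : R ≤ N) (hl : l ≤ N) :
    |(1 - (R : ℝ) / N) ^ l - ((N - R).choose l : ℝ) / (N.choose l : ℝ)| ≤ 4 * l / N := by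
  have hN0 : (0:ℝ) < N := by exact_mod_cast hN
  have hx0 : (0:ℝ) ≤ (R:ℝ) / N := by positivity
  have hx1 : (R:ℝ) / N ≤ 1 := by
    rw [div_le_one hN0]; exact_mod_cast hR
  have ha0 : (0:ℝ) ≤ 1 - (R:ℝ)/N := by linarith
  have ha1 : 1 - (R:ℝ)/N ≤ 1 := by linarith
  have hchoose_pos : (0:ℝ) < (N.choose l : ℝ) := by exact_mod_cast Nat.choose_pos hl
  have hH0 : (0:ℝ) ≤ ((N - R).choose l : ℝ) / (N.choose l : ℝ) := by positivity
  have hH1 : ((N - R).choose l : ℝ) / (N.choose l : ℝ) ≤ 1 := by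
    rw [div_le_one hchoose_pos]
    exact_mod_cast Nat.choose_le_choose l (Nat.sub_le N R)
  have hB0 : (0:ℝ) ≤ (1 - (R:ℝ)/N) ^ l := pow_nonneg ha0 l
  have hB1 : (1 - (R:ℝ)/N) ^ l ≤ 1 := pow_le_one₀ ha0 ha1
  by_cases h2l : N < 2 * l
  · -- trivial case : RHS ≥ 2
    have : (N:ℝ) < 2 * l := by exact_mod_cast h2l
    have h1 : (1:ℝ) ≤ 4 * l / N := by
      rw [le_div_iff₀ hN0]; nlinarith
    rw [abs_le]
    constructor <;> linarith
  · push_neg at h2l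
    have h2l' : (2 * l : ℝ) ≤ N := by exact_mod_cast h2l
    have hlR : (0:ℝ) ≤ (l:ℝ) := Nat.cast_nonneg l
    by_cases hlM : l ≤ N - R
    · -- main case
      set a : ℝ := 1 - (R:ℝ)/N with ha_def
      set b : ℕ → ℝ := fun i => ((N:ℝ) - R - i) / ((N:ℝ) - i) with hb_def
      -- rewrite hypergeometric probability as a product
      have hprod : ((N - R).choose l : ℝ) / (N.choose l : ℝ) = ∏ i ∈ range l, b i := by
        have e1 : ((N - R).descFactorial l : ℝ) = (l.factorial : ℝ) * ((N-R).choose l : ℝ) := by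
          exact_mod_cast congrArg (Nat.cast : ℕ → ℝ) (Nat.descFactorial_eq_factorial_mul_choose (N-R) l)
        have e2 : (N.descFactorial l : ℝ) = (l.factorial : ℝ) * (N.choose l : ℝ) := by
          exact_mod_cast congrArg (Nat.cast : ℕ → ℝ) (Nat.descFactorial_eq_factorial_mul_choose N l)
        have hfac : (0:ℝ) < (l.factorial : ℝ) := by exact_mod_cast l.factorial_pos
        have e3 : ((N - R).choose l : ℝ) / (N.choose l : ℝ)
            = ((N - R).descFactorial l : ℝ) / (N.descFactorial l : ℝ) := by
          rw [e1, e2, mul_div_mul_left _ _ (ne_of_gt hfac)]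
        rw [e3, Nat.descFactorial_eq_prod_range, Nat.descFactorial_eq_prod_range]
        push_cast
        rw [← prod_div_distrib]
        apply prod_congr rfl
        intro i hi
        have hi' : i < l := mem_range.mp hi
        have hiM : i ≤ N - R := le_of_lt (lt_of_lt_of_le hi' hlM)
        have hiN : i ≤ N := hiM.trans (Nat.sub_le N R)
        rw [Nat.cast_sub hiM, Nat.cast_sub hiN, Nat.cast_sub hR]
      have hbi : ∀ i < l, 0 ≤ b i ∧ b i ≤ a := by
        intro i hi
        have hiN : (i:ℝ) < N := by
          have : i < N := lt_of_lt_of_le hi hl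
          exact_mod_cast this
        have hden : (0:ℝ) < (N:ℝ) - i := by linarith
        have hnum : (0:ℝ) ≤ (N:ℝ) - R - i := by
          have : (i:ℝ) ≤ ((N - R : ℕ) : ℝ) := by
            exact_mod_cast le_of_lt (lt_of_lt_of_le hi hlM)
          rw [Nat.cast_sub hR] at this
          linarith
        constructor
        · exact div_nonneg hnum (le_of_lt hden)
        · rw [hb_def, ha_def]
          rw [div_le_iff₀ hden]
          have hRN : (R:ℝ) ≤ N := by exact_mod_cast hR
          have he : (1 - (R:ℝ)/N) * ((N:ℝ) - i) - ((N:ℝ) - R - i)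
              = (R:ℝ) * i / N := by field_simp; ring
          have hpos : (0:ℝ) ≤ (R:ℝ) * i / N := by positivity
          linarith
      obtain ⟨hP0, hPle, hPsum⟩ := aux_prod_bound a b ha0 ha1 l hbi
      rw [hprod]
      rw [abs_of_nonneg (by linarith)]
      -- bound each summand by 2 / N
      have hterm : ∀ i ∈ range l, a ^ i * (a - b i) ≤ 2 / N := by
        intro i hi
        have hi' : i < l := mem_range.mp hi
        have hiN : (i:ℝ) < N := by
          have : i < N := lt_of_lt_of_le hi' hl
          exact_mod_cast this
        have hden : (0:ℝ) < (N:ℝ) - i := by linarith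
        have hiR : (0:ℝ) ≤ (i:ℝ) := Nat.cast_nonneg i
        have hRR : (0:ℝ) ≤ (R:ℝ) := Nat.cast_nonneg R
        -- a - b i = R * i / (N * (N - i))
        have hdiff : a - b i = (R:ℝ) * i / ((N:ℝ) * ((N:ℝ) - i)) := by
          rw [ha_def, hb_def]
          field_simp
          ring
        -- a ^ i * (1 + i * (R/N)) ≤ 1
        have hpow := aux_pow_bound ((R:ℝ)/N) hx0 hx1 i
        rw [← ha_def] at hpow
        have h1ix : (0:ℝ) < 1 + (i:ℝ) * ((R:ℝ)/N) := by positivity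
        have hai : a ^ i ≤ 1 / (1 + (i:ℝ) * ((R:ℝ)/N)) := by
          rw [le_div_iff₀ h1ix]; exact hpow
        have hai0 : (0:ℝ) ≤ a ^ i := pow_nonneg ha0 i
        have hdnn : (0:ℝ) ≤ (R:ℝ) * i / ((N:ℝ) * ((N:ℝ) - i)) := by positivity
        have step1 : a ^ i * (a - b i) ≤ (1 / (1 + (i:ℝ) * ((R:ℝ)/N))) * ((R:ℝ) * i / ((N:ℝ) * ((N:ℝ) - i))) := by
          rw [hdiff]
          exact mul_le_mul_of_nonneg_right hai hdnn
        have step2 : (1 / (1 + (i:ℝ) * ((R:ℝ)/N))) * ((R:ℝ) * i / ((N:ℝ) * ((N:ℝ) - i))) ≤ 1 / ((N:ℝ) - i) := by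
          rw [div_mul_div_comm, div_le_div_iff₀ (by positivity) hden]
          have expand : (1 + (i:ℝ) * ((R:ℝ)/N)) * ((N:ℝ) * ((N:ℝ) - i))
              = ((N:ℝ) + i * R) * ((N:ℝ) - i) := by field_simp
          rw [one_mul, expand]
          have : (R:ℝ) * i ≤ (N:ℝ) + i * R := by linarith
          nlinarith
        have step3 : 1 / ((N:ℝ) - i) ≤ 2 / N := by
          rw [div_le_div_iff₀ hden hN0]
          have : (2 * i : ℝ) ≤ N := by
            have : (i:ℝ) < l := by exact_mod_cast hi'
            linarith
          linarith
        linarith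
      have hsum : ∑ i ∈ range l, a ^ i * (a - b i) ≤ l * (2 / N) := by
        calc ∑ i ∈ range l, a ^ i * (a - b i) ≤ ∑ _i ∈ range l, (2 / (N:ℝ)) :=
            sum_le_sum hterm
          _ = l * (2 / N) := by rw [sum_const, card_range]; simp [mul_comm]
      have hfin : (l:ℝ) * (2 / N) ≤ 4 * l / N := by
        rw [show (l:ℝ) * (2 / N) = 2 * l / N by ring]
        gcongr
        linarith
      linarith
    · -- l > N - R : hypergeometric probability is 0
      push_neg at hlM
      have hzero : (N - R).choose l = 0 := Nat.choose_eq_zero_of_lt hlM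
      rw [hzero]
      simp only [Nat.cast_zero, zero_div, sub_zero]
      rw [abs_of_nonneg hB0]
      have hl1 : 1 ≤ l := by omega
      have hNRl : ((N:ℝ) - R) < l := by
        have : ((N - R : ℕ) : ℝ) < l := by exact_mod_cast hlM
        rw [Nat.cast_sub hR] at this
        exact this
      have hbase : 1 - (R:ℝ)/N ≤ (l:ℝ) / N := by
        have e : 1 - (R:ℝ)/N = ((N:ℝ) - R) / N := by field_simp
        rw [e]
        gcongr
        all_goals linarith
      have hlN1 : (l:ℝ) / N ≤ 1 := by
        rw [div_le_one hN0]; exact_mod_cast hl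
      have h1 : (1 - (R:ℝ)/N) ^ l ≤ ((l:ℝ)/N) ^ l :=
        pow_le_pow_left₀ ha0 hbase l
      have h2 : ((l:ℝ)/N) ^ l ≤ ((l:ℝ)/N) ^ 1 := by
        apply pow_le_pow_of_le_one (by positivity) hlN1 hl1
      have h3 : ((l:ℝ)/N) ^ 1 = (l:ℝ)/N := pow_one _
      have h4 : (l:ℝ)/N ≤ 4 * l / N := by
        gcongr
        linarith
      linarith [h1, h2, h4, h3.le, h3.ge]
end
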